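/- arXiv:2404.06376 — 9 statements merged into one kernel-verified Lean document; each statement's English description precedes it below -/
import Mathlib

section
/- Let P be a set of exactly four points in the plane ℝ². The rectilinear convex hull RH(P) has positive area (i.e., positive two-dimensional Lebesgue measure) if and only if there exists a point c ∈ ℝ² such that each of the four open quadrants NE(c), NW(c), SW(c), SE(c) contains a point of P. -/
open MeasureTheory

/-- The open north-east quadrant of a point `c ∈ ℝ²`. -/
def quadNE (c : ℝ × ℝ) : Set (ℝ × ℝ) := {z | c.1 < z.1 ∧ c.2 < z.2}

/-- The open north-west quadrant of a point `c ∈ ℝ²`. -/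
def quadNW (c : ℝ × ℝ) : Set (ℝ × ℝ) := {z | z.1 < c.1 ∧ c.2 < z.2}

/-- The open south-west quadrant of a point `c ∈ ℝ²`. -/
def quadSW (c : ℝ × ℝ) : Set (ℝ × ℝ) := {z | z.1 < c.1 ∧ z.2 < c.2}

/-- The open south-east quadrant of a point `c ∈ ℝ²`. -/
def quadSE (c : ℝ × ℝ) : Set (ℝ × ℝ) := {z | c.1 < z.1 ∧ z.2 < c.2}

/-- A set is an open quadrant if it is one of the four open quadrants of some apex `c`. -/
def IsOpenQuadrant (Q : Set (ℝ × ℝ)) : Prop :=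
  ∃ c : ℝ × ℝ, Q = quadNE c ∨ Q = quadNW c ∨ Q = quadSW c ∨ Q = quadSE c

/-- The rectilinear convex hull of `P`: the points `x` such that every open quadrant
containing `x` contains a point of `P`. -/
def RH (P : Set (ℝ × ℝ)) : Set (ℝ × ℝ) :=
  {x | ∀ Q : Set (ℝ × ℝ), IsOpenQuadrant Q → x ∈ Q → (Q ∩ P).Nonempty}

/-!
A cross centre of `P` (a point each of whose four open quadrants meets `P`) lies in `RH P`,
since every open quadrant containing it contains its quadrant of the same type; and being a
cross centre is an open condition, so a single cross centre gives `RH P` an open subset, hence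
positive area. Conversely, let `x ∈ RH P` avoid the finitely many vertical and horizontal lines
through points of `P`. An open box around `x` then meets none of these lines, so each quadrant of
`x` meets `P` in the same points as the quadrant of the same type apexed at the suitable corner of
the box, which contains `x`. Hence `x` is a cross centre, and without cross centres `RH P` lies in
a null union of lines.
-/

open Set

def IsCrossCenter (P : Set (ℝ × ℝ)) (c : ℝ × ℝ) : Prop :=
  (quadNE c ∩ P).Nonempty ∧ (quadNW c ∩ P).Nonempty ∧
    (quadSW c ∩ P).Nonempty ∧ (quadSE c ∩ P).Nonempty

lemma isOpen_setOf_inter_nonempty {X Y : Type*} [TopologicalSpace X] {q : X → Set Y}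
    (hq : ∀ y, IsOpen {x | y ∈ q x}) (P : Set Y) : IsOpen {x | (q x ∩ P).Nonempty} := by
  have : {x | (q x ∩ P).Nonempty} = ⋃ y ∈ P, {x | y ∈ q x} := by
    ext x; simp [Set.Nonempty, and_comm]
  exact this ▸ isOpen_biUnion fun y _ => hq y

lemma isOpen_setOf_isCrossCenter (P : Set (ℝ × ℝ)) : IsOpen {c | IsCrossCenter P c} := by
  refine .inter ?_ (.inter ?_ (.inter ?_ ?_)) <;>
    refine isOpen_setOf_inter_nonempty (fun p => ?_) P <;>
    simp only [quadNE, quadNW, quadSW, quadSE, ofPred_and] <;>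
    exact (isOpen_lt (by fun_prop) (by fun_prop)).inter (isOpen_lt (by fun_prop) (by fun_prop))

lemma setOf_isCrossCenter_subset_RH (P : Set (ℝ × ℝ)) : {c | IsCrossCenter P c} ⊆ RH P := by
  rintro x ⟨⟨a, ha, haP⟩, ⟨b, hb, hbP⟩, ⟨c, hc, hcP⟩, ⟨d, hd, hdP⟩⟩ Q ⟨e, hQ⟩ hxQ
  rcases hQ with rfl | rfl | rfl | rfl
  · exact ⟨a, ⟨hxQ.1.trans ha.1, hxQ.2.trans ha.2⟩, haP⟩
  · exact ⟨b, ⟨hb.1.trans hxQ.1, hxQ.2.trans hb.2⟩, hbP⟩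
  · exact ⟨c, ⟨hc.1.trans hxQ.1, hc.2.trans hxQ.2⟩, hcP⟩
  · exact ⟨d, ⟨hxQ.1.trans hd.1, hd.2.trans hxQ.2⟩, hdP⟩

lemma le_of_lt_of_notMem_Ioo {α : Type*} [LinearOrder α] {a b s : α} (hs : s ∉ Ioo a b)
    (ha : a < s) : b ≤ s :=
  not_lt.1 fun h => hs ⟨ha, h⟩

lemma le_of_lt_of_notMem_Ioo' {α : Type*} [LinearOrder α] {a b s : α} (hs : s ∉ Ioo a b)
    (hb : s < b) : s ≤ a :=
  not_lt.1 fun h => hs ⟨h, hb⟩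

lemma Set.Finite.exists_Ioo_notMem {S : Set ℝ} (hS : S.Finite) {x : ℝ} (hx : x ∉ S) :
    ∃ l u, x ∈ Ioo l u ∧ ∀ s ∈ S, s ∉ Ioo l u := by
  obtain ⟨l, u, hx, hsub⟩ :=
    mem_nhds_iff_exists_Ioo_subset.1 (hS.isClosed.isOpen_compl.mem_nhds hx)
  exact ⟨l, u, hx, fun s hs h => hsub h hs⟩

lemma isCrossCenter_of_mem_RH {P : Set (ℝ × ℝ)} (hP : P.Finite) {x : ℝ × ℝ} (hx : x ∈ RH P)
    (hx₁ : x.1 ∉ Prod.fst '' P) (hx₂ : x.2 ∉ Prod.snd '' P) : IsCrossCenter P x := by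
  obtain ⟨l₁, u₁, ⟨hl₁, hu₁⟩, hfst⟩ := (hP.image Prod.fst).exists_Ioo_notMem hx₁
  obtain ⟨l₂, u₂, ⟨hl₂, hu₂⟩, hsnd⟩ := (hP.image Prod.snd).exists_Ioo_notMem hx₂
  have h₁ : ∀ p ∈ P, p.1 ∉ Ioo l₁ u₁ := fun p hp => hfst _ (mem_image_of_mem _ hp)
  have h₂ : ∀ p ∈ P, p.2 ∉ Ioo l₂ u₂ := fun p hp => hsnd _ (mem_image_of_mem _ hp)
  refine ⟨?_, ?_, ?_, ?_⟩
  · obtain ⟨p, ⟨hp₁, hp₂⟩, hp⟩ := hx _ ⟨(l₁, l₂), Or.inl rfl⟩ ⟨hl₁, hl₂⟩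
    exact ⟨p, ⟨hu₁.trans_le (le_of_lt_of_notMem_Ioo (h₁ p hp) hp₁),
      hu₂.trans_le (le_of_lt_of_notMem_Ioo (h₂ p hp) hp₂)⟩, hp⟩
  · obtain ⟨p, ⟨hp₁, hp₂⟩, hp⟩ := hx _ ⟨(u₁, l₂), Or.inr (Or.inl rfl)⟩ ⟨hu₁, hl₂⟩
    exact ⟨p, ⟨(le_of_lt_of_notMem_Ioo' (h₁ p hp) hp₁).trans_lt hl₁,
      hu₂.trans_le (le_of_lt_of_notMem_Ioo (h₂ p hp) hp₂)⟩, hp⟩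
  · obtain ⟨p, ⟨hp₁, hp₂⟩, hp⟩ := hx _ ⟨(u₁, u₂), Or.inr (Or.inr (Or.inl rfl))⟩ ⟨hu₁, hu₂⟩
    exact ⟨p, ⟨(le_of_lt_of_notMem_Ioo' (h₁ p hp) hp₁).trans_lt hl₁,
      (le_of_lt_of_notMem_Ioo' (h₂ p hp) hp₂).trans_lt hl₂⟩, hp⟩
  · obtain ⟨p, ⟨hp₁, hp₂⟩, hp⟩ := hx _ ⟨(l₁, u₂), Or.inr (Or.inr (Or.inr rfl))⟩ ⟨hl₁, hu₂⟩
    exact ⟨p, ⟨hu₁.trans_le (le_of_lt_of_notMem_Ioo (h₁ p hp) hp₁),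
      (le_of_lt_of_notMem_Ioo' (h₂ p hp) hp₂).trans_lt hl₂⟩, hp⟩

lemma RH_subset_union_setOf_isCrossCenter {P : Set (ℝ × ℝ)} (hP : P.Finite) :
    RH P ⊆ (Prod.fst '' P) ×ˢ univ ∪ univ ×ˢ (Prod.snd '' P) ∪ {c | IsCrossCenter P c} := by
  intro x hx
  by_cases hx₁ : x.1 ∈ Prod.fst '' P
  · exact Or.inl (Or.inl ⟨hx₁, trivial⟩)
  by_cases hx₂ : x.2 ∈ Prod.snd '' P
  · exact Or.inl (Or.inr ⟨trivial, hx₂⟩)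
  exact Or.inr (isCrossCenter_of_mem_RH hP hx hx₁ hx₂)

lemma volume_prod_univ_union_univ_prod {S T : Set ℝ} (hS : S.Countable) (hT : T.Countable) :
    volume (S ×ˢ univ ∪ univ ×ˢ T : Set (ℝ × ℝ)) = 0 := by
  simp [Measure.volume_eq_prod, Measure.prod_prod, hS.measure_zero, hT.measure_zero]

lemma volume_RH_eq_zero {P : Set (ℝ × ℝ)} (hP : P.Finite) (h : ∀ c, ¬ IsCrossCenter P c) :
    volume (RH P) = 0 := by
  refine measure_mono_null (RH_subset_union_setOf_isCrossCenter hP) ?_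
  simpa [h] using volume_prod_univ_union_univ_prod (hP.image Prod.fst).countable
    (hP.image Prod.snd).countable

/-- The rectilinear convex hull of a set of four points in the plane has positive area
if and only if there is a point `c` each of whose open quadrants contains a point of `P`. -/
theorem rh_pos_area_iff_cross (P : Set (ℝ × ℝ)) (hP : P.ncard = 4) :
    0 < volume (RH P) ↔
      ∃ c : ℝ × ℝ, (quadNE c ∩ P).Nonempty ∧ (quadNW c ∩ P).Nonempty ∧
        (quadSW c ∩ P).Nonempty ∧ (quadSE c ∩ P).Nonempty := by
  have hfin : P.Finite := Set.finite_of_ncard_ne_zero (by omega)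
  constructor
  · intro hpos
    by_contra h
    exact hpos.ne' (volume_RH_eq_zero hfin fun c hc => h ⟨c, hc⟩)
  · rintro ⟨c, hc⟩
    exact ((isOpen_setOf_isCrossCenter P).measure_pos volume ⟨c, hc⟩).trans_le
      (measure_mono (setOf_isCrossCenter_subset_RH P))
end

section
/- Let P be a finite set of points in ℝ² and let p ∈ ℝ² be a point such that each of the four open quadrants NE(p), NW(p), SW(p), SE(p) contains a point of P. Then there exists ε > 0 such that the open ball of radius ε centered at p is entirely contained in the rectilinear convex hull RH(P); in particular, RH(P) has positive two-dimensional Lebesgue measure. -/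
open MeasureTheory

open Topology

/-!
Quadrants of the same orientation are nested: if `x ∈ NE(c)` then `NE(x) ⊆ NE(c)`, and likewise
for the other three. Hence `x ∈ RH(P)` as soon as the four quadrants at `x` itself meet `P`.
That condition is open in `x`, because `a ∈ NE(x)` says exactly `x ∈ SW(a)`, an open set; so
it holds on a neighbourhood of `p`.
-/

section
variable (c : ℝ × ℝ)

theorem isOpen_quadNE : IsOpen (quadNE c) :=
  (isOpen_lt continuous_const continuous_fst).inter (isOpen_lt continuous_const continuous_snd)

theorem isOpen_quadNW : IsOpen (quadNW c) :=
  (isOpen_lt continuous_fst continuous_const).inter (isOpen_lt continuous_const continuous_snd)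

theorem isOpen_quadSW : IsOpen (quadSW c) :=
  (isOpen_lt continuous_fst continuous_const).inter (isOpen_lt continuous_snd continuous_const)

theorem isOpen_quadSE : IsOpen (quadSE c) :=
  (isOpen_lt continuous_const continuous_fst).inter (isOpen_lt continuous_snd continuous_const)

end

section
variable {c x : ℝ × ℝ}

theorem quadNE_subset_of_mem (h : x ∈ quadNE c) : quadNE x ⊆ quadNE c :=
  fun _ hz => ⟨h.1.trans hz.1, h.2.trans hz.2⟩

theorem quadNW_subset_of_mem (h : x ∈ quadNW c) : quadNW x ⊆ quadNW c :=
  fun _ hz => ⟨hz.1.trans h.1, h.2.trans hz.2⟩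

theorem quadSW_subset_of_mem (h : x ∈ quadSW c) : quadSW x ⊆ quadSW c :=
  fun _ hz => ⟨hz.1.trans h.1, hz.2.trans h.2⟩

theorem quadSE_subset_of_mem (h : x ∈ quadSE c) : quadSE x ⊆ quadSE c :=
  fun _ hz => ⟨h.1.trans hz.1, hz.2.trans h.2⟩

end

section
variable {P : Set (ℝ × ℝ)} {x : ℝ × ℝ}

theorem mem_rh_of_cross (hNE : (quadNE x ∩ P).Nonempty) (hNW : (quadNW x ∩ P).Nonempty)
    (hSW : (quadSW x ∩ P).Nonempty) (hSE : (quadSE x ∩ P).Nonempty) : x ∈ RH P := by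
  rintro Q ⟨c, rfl | rfl | rfl | rfl⟩ hx
  · exact hNE.mono (Set.inter_subset_inter_left P (quadNE_subset_of_mem hx))
  · exact hNW.mono (Set.inter_subset_inter_left P (quadNW_subset_of_mem hx))
  · exact hSW.mono (Set.inter_subset_inter_left P (quadSW_subset_of_mem hx))
  · exact hSE.mono (Set.inter_subset_inter_left P (quadSE_subset_of_mem hx))

theorem rh_mem_nhds_of_cross (hNE : (quadNE x ∩ P).Nonempty) (hNW : (quadNW x ∩ P).Nonempty)
    (hSW : (quadSW x ∩ P).Nonempty) (hSE : (quadSE x ∩ P).Nonempty) : RH P ∈ 𝓝 x := by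
  obtain ⟨a, ha, haP⟩ := hNE
  obtain ⟨b, hb, hbP⟩ := hNW
  obtain ⟨c, hc, hcP⟩ := hSW
  obtain ⟨d, hd, hdP⟩ := hSE
  filter_upwards [(isOpen_quadSW a).mem_nhds ha, (isOpen_quadSE b).mem_nhds hb,
    (isOpen_quadNE c).mem_nhds hc, (isOpen_quadNW d).mem_nhds hd] with y hya hyb hyc hyd
  exact mem_rh_of_cross ⟨a, hya, haP⟩ ⟨b, hyb, hbP⟩ ⟨c, hyc, hcP⟩ ⟨d, hyd, hdP⟩

end

theorem ball_subset_rh_of_cross_general (P : Set (ℝ × ℝ)) (p : ℝ × ℝ)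
    (hNE : (quadNE p ∩ P).Nonempty) (hNW : (quadNW p ∩ P).Nonempty)
    (hSW : (quadSW p ∩ P).Nonempty) (hSE : (quadSE p ∩ P).Nonempty) :
    (∃ ε > 0, Metric.ball p ε ⊆ RH P) ∧ 0 < volume (RH P) := by
  have hnhds := rh_mem_nhds_of_cross hNE hNW hSW hSE
  exact ⟨Metric.mem_nhds_iff.mp hnhds, volume.measure_pos_of_mem_nhds hnhds⟩

/-- If each of the four open quadrants of `p` contains a point of the finite set `P`,
then some open ball around `p` is contained in `RH P`; in particular `RH P` has
positive area. -/
theorem ball_subset_rh_of_cross (P : Set (ℝ × ℝ)) (hP : P.Finite) (p : ℝ × ℝ)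
    (hNE : (quadNE p ∩ P).Nonempty) (hNW : (quadNW p ∩ P).Nonempty)
    (hSW : (quadSW p ∩ P).Nonempty) (hSE : (quadSE p ∩ P).Nonempty) :
    (∃ ε > 0, Metric.ball p ε ⊆ RH P) ∧ 0 < volume (RH P) :=
  ball_subset_rh_of_cross_general P p hNE hNW hSW hSE
end

section
/- Let P be a set of points in ℝ² with a coloring χ : P → C, let m ∈ ℝ, and write P⁺ = {z ∈ P : z has y-coordinate > m} and P⁻ = {z ∈ P : z has y-coordinate < m}. Let NE ⊆ P⁺ be a set of at most four points with pairwise distinct colors such that for every z ∈ P⁺: if some z' ∈ NE satisfies χ(z') = χ(z) then that z' has x-coordinate ≥ the x-coordinate of z, and if no point of NE has color χ(z) then NE has exactly four elements, each with x-coordinate ≥ the x-coordinate of z. Let NW ⊆ P⁺, SW ⊆ P⁻, SE ⊆ P⁻ be defined analogously with 'x-coordinate ≤' in place of 'x-coordinate ≥' for NW and SW, and with P⁻ in place of P⁺ for SW and SE. Suppose there is a 4-colored cross with center c and witness points p ∈ NE(c) ∩ P, q ∈ NW(c) ∩ P, r ∈ SW(c) ∩ P, s ∈ SE(c) ∩ P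 of pairwise distinct colors such that p and q have y-coordinate > m and r and s have y-coordinate < m. Then there exists a point d ∈ ℝ² with y-coordinate m and points p' ∈ NE ∩ NE(d), q' ∈ NW ∩ NW(d), r' ∈ SW ∩ SW(d), s' ∈ SE ∩ SE(d) having pairwise distinct colors. -/
open MeasureTheory

/-- `S` is a candidate point set for the points of `side`, where `le x x'` means
"`x'` is at least as extreme as `x`" in the relevant horizontal direction:
`S ⊆ side`, `S` has at most four points of pairwise distinct colors, every point of
`side` whose color appears in `S` is dominated by the representative of its color in `S`,
and if the color of a point of `side` does not appear in `S`, then `S` has exactly four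
elements, all of them dominating that point. -/
def IsCandidateSet {C : Type*} (χ : ℝ × ℝ → C) (side : Set (ℝ × ℝ))
    (le : ℝ → ℝ → Prop) (S : Set (ℝ × ℝ)) : Prop :=
  S ⊆ side ∧ S.ncard ≤ 4 ∧ Set.InjOn χ S ∧
    (∀ z ∈ side, ∀ z' ∈ S, χ z' = χ z → le z.1 z'.1) ∧
    (∀ z ∈ side, (∀ z' ∈ S, χ z' ≠ χ z) →
      S.ncard = 4 ∧ ∀ z' ∈ S, le z.1 z'.1)

/-!
The line `y = m` separates the upper witnesses `p, q` from the lower ones `r, s`, so the cross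
can be recentred at `d = (c₁, m)`. A candidate set, cut down to the points at least as extreme
as the witness of its quadrant, still lies in that quadrant of `d`, and it either offers the
witness's own color or consists of four points of distinct colors. Four sets of colors each of
which contains a prescribed color (the prescribed colors being distinct) or has four elements
admit a system of distinct representatives, by Hall's marriage theorem.
-/

open Function Finset in
theorem Finset.exists_injective_mem_of_mem_or_card_le {ι α : Type*} [Fintype ι] [DecidableEq α]
    (t : ι → Finset α) (c : ι → α) (hc : Injective c)
    (ht : ∀ i, c i ∈ t i ∨ Fintype.card ι ≤ #(t i)) :
    ∃ f : ι → α, Injective f ∧ ∀ i, f i ∈ t i := by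
  refine (all_card_le_biUnion_card_iff_exists_injective t).mp fun s => ?_
  by_cases hlarge : ∃ i ∈ s, Fintype.card ι ≤ #(t i)
  · obtain ⟨i, hi, hcard⟩ := hlarge
    calc #s ≤ Fintype.card ι := card_le_univ s
      _ ≤ #(t i) := hcard
      _ ≤ #(s.biUnion t) := card_le_card (subset_biUnion_of_mem t hi)
  · push Not at hlarge
    have hsub : s.image c ⊆ s.biUnion t := by
      intro x hx
      obtain ⟨i, hi, rfl⟩ := mem_image.mp hx
      exact mem_biUnion.mpr ⟨i, hi, (ht i).resolve_right (hlarge i hi).not_ge⟩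
    calc #s = #(s.image c) := (card_image_of_injective s hc).symm
      _ ≤ #(s.biUnion t) := card_le_card hsub

open Function in
theorem Set.exists_injective_mem_of_mem_or_card_le {ι α : Type*} [Fintype ι]
    (B : ι → Set α) (c : ι → α) (hc : Injective c)
    (hB : ∀ i, c i ∈ B i ∨ (Fintype.card ι : ℕ∞) ≤ (B i).encard) :
    ∃ f : ι → α, Injective f ∧ ∀ i, f i ∈ B i := by
  classical
  have hfinite : ∀ i, ∃ t : Finset α, ↑t ⊆ B i ∧ (c i ∈ t ∨ Fintype.card ι ≤ t.card) := by
    intro i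
    rcases hB i with hmem | hcard
    · exact ⟨{c i}, by simpa using hmem, by simp⟩
    · obtain ⟨t, hts, htcard⟩ := Set.exists_subset_encard_eq hcard
      have htfin : t.Finite := Set.finite_of_encard_eq_coe htcard
      refine ⟨htfin.toFinset, by simpa using hts, Or.inr ?_⟩
      rw [htfin.encard_eq_coe_toFinset_card, Nat.cast_inj] at htcard
      exact htcard.ge
  choose t hts ht using hfinite
  obtain ⟨f, hf, hft⟩ := Finset.exists_injective_mem_of_mem_or_card_le t c hc ht
  exact ⟨f, hf, fun i => hts i (hft i)⟩

theorem exists_four_distinct_colors {α C : Type*} (χ : α → C) {A₁ A₂ A₃ A₄ : Set α}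
    {c₁ c₂ c₃ c₄ : C}
    (hc : c₁ ≠ c₂ ∧ c₁ ≠ c₃ ∧ c₁ ≠ c₄ ∧ c₂ ≠ c₃ ∧ c₂ ≠ c₄ ∧ c₃ ≠ c₄)
    (h₁ : c₁ ∈ χ '' A₁ ∨ 4 ≤ (χ '' A₁).encard) (h₂ : c₂ ∈ χ '' A₂ ∨ 4 ≤ (χ '' A₂).encard)
    (h₃ : c₃ ∈ χ '' A₃ ∨ 4 ≤ (χ '' A₃).encard) (h₄ : c₄ ∈ χ '' A₄ ∨ 4 ≤ (χ '' A₄).encard) :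
    ∃ z₁ ∈ A₁, ∃ z₂ ∈ A₂, ∃ z₃ ∈ A₃, ∃ z₄ ∈ A₄,
      χ z₁ ≠ χ z₂ ∧ χ z₁ ≠ χ z₃ ∧ χ z₁ ≠ χ z₄ ∧
        χ z₂ ≠ χ z₃ ∧ χ z₂ ≠ χ z₄ ∧ χ z₃ ≠ χ z₄ := by
  have hinj : Function.Injective ![c₁, c₂, c₃, c₄] := by
    intro i j hij
    fin_cases i <;> fin_cases j <;> simp_all [eq_comm]
  obtain ⟨f, hf, hfB⟩ := Set.exists_injective_mem_of_mem_or_card_le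
    ![χ '' A₁, χ '' A₂, χ '' A₃, χ '' A₄] ![c₁, c₂, c₃, c₄] hinj
    (by intro i; fin_cases i <;> assumption)
  obtain ⟨z₁, hz₁, hf₁⟩ := hfB 0
  obtain ⟨z₂, hz₂, hf₂⟩ := hfB 1
  obtain ⟨z₃, hz₃, hf₃⟩ := hfB 2
  obtain ⟨z₄, hz₄, hf₄⟩ := hfB 3
  refine ⟨z₁, hz₁, z₂, hz₂, z₃, hz₃, z₄, hz₄, ?_⟩
  rw [hf₁, hf₂, hf₃, hf₄]
  exact ⟨hf.ne (by decide), hf.ne (by decide), hf.ne (by decide),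
    hf.ne (by decide), hf.ne (by decide), hf.ne (by decide)⟩

theorem IsCandidateSet.color_mem_or_four_le_encard {C : Type*} {χ : ℝ × ℝ → C}
    {side : Set (ℝ × ℝ)} {le : ℝ → ℝ → Prop} {S : Set (ℝ × ℝ)}
    (hS : IsCandidateSet χ side le S) {z : ℝ × ℝ} (hz : z ∈ side) :
    χ z ∈ χ '' {z' ∈ S | le z.1 z'.1} ∨ 4 ≤ (χ '' {z' ∈ S | le z.1 z'.1}).encard := by
  obtain ⟨-, -, hinj, hdom, hfull⟩ := hS
  by_cases hcolor : ∃ z' ∈ S, χ z' = χ z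
  · obtain ⟨z', hz'S, hz'c⟩ := hcolor
    exact Or.inl ⟨z', ⟨hz'S, hdom z hz z' hz'S hz'c⟩, hz'c⟩
  · push Not at hcolor
    obtain ⟨hcard, hall⟩ := hfull z hz hcolor
    have hsep : {z' ∈ S | le z.1 z'.1} = S := Set.sep_eq_self_iff_mem_true.mpr hall
    have hfin : S.Finite := Set.finite_of_ncard_pos (by omega)
    right
    rw [hsep, hinj.encard_image, ← hfin.cast_ncard_eq, hcard]
    rfl

/-- If candidate point sets `NEs`, `NWs`, `SWs`, `SEs` are given for the horizontal line
`y = m`, and there is a 4-colored cross whose upper witnesses lie strictly above `m`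
and whose lower witnesses lie strictly below `m`, then there is a 4-colored cross with
center on the line `y = m` all of whose witness points come from the candidate sets. -/
theorem cross_from_candidate_sets {C : Type*} (P : Set (ℝ × ℝ)) (χ : ℝ × ℝ → C)
    (m : ℝ) (NEs NWs SWs SEs : Set (ℝ × ℝ))
    (hNE : IsCandidateSet χ {z ∈ P | m < z.2} (fun x x' => x ≤ x') NEs)
    (hNW : IsCandidateSet χ {z ∈ P | m < z.2} (fun x x' => x' ≤ x) NWs)
    (hSW : IsCandidateSet χ {z ∈ P | z.2 < m} (fun x x' => x' ≤ x) SWs)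
    (hSE : IsCandidateSet χ {z ∈ P | z.2 < m} (fun x x' => x ≤ x') SEs)
    (c p q r s : ℝ × ℝ)
    (hp : p ∈ quadNE c ∩ P) (hq : q ∈ quadNW c ∩ P)
    (hr : r ∈ quadSW c ∩ P) (hs : s ∈ quadSE c ∩ P)
    (hcol : χ p ≠ χ q ∧ χ p ≠ χ r ∧ χ p ≠ χ s ∧ χ q ≠ χ r ∧ χ q ≠ χ s ∧ χ r ≠ χ s)
    (hpm : m < p.2) (hqm : m < q.2) (hrm : r.2 < m) (hsm : s.2 < m) :
    ∃ d : ℝ × ℝ, d.2 = m ∧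
      ∃ p' ∈ NEs ∩ quadNE d, ∃ q' ∈ NWs ∩ quadNW d,
        ∃ r' ∈ SWs ∩ quadSW d, ∃ s' ∈ SEs ∩ quadSE d,
        χ p' ≠ χ q' ∧ χ p' ≠ χ r' ∧ χ p' ≠ χ s' ∧
          χ q' ≠ χ r' ∧ χ q' ≠ χ s' ∧ χ r' ≠ χ s' := by
  obtain ⟨p', ⟨hp'S, hp'x⟩, q', ⟨hq'S, hq'x⟩, r', ⟨hr'S, hr'x⟩, s', ⟨hs'S, hs'x⟩, hcol'⟩ :=
    exists_four_distinct_colors χ hcol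
      (hNE.color_mem_or_four_le_encard ⟨hp.2, hpm⟩) (hNW.color_mem_or_four_le_encard ⟨hq.2, hqm⟩)
      (hSW.color_mem_or_four_le_encard ⟨hr.2, hrm⟩) (hSE.color_mem_or_four_le_encard ⟨hs.2, hsm⟩)
  exact ⟨(c.1, m), rfl,
    p', ⟨hp'S, hp.1.1.trans_le hp'x, (hNE.1 hp'S).2⟩,
    q', ⟨hq'S, hq'x.trans_lt hq.1.1, (hNW.1 hq'S).2⟩,
    r', ⟨hr'S, hr'x.trans_lt hr.1.1, (hSW.1 hr'S).2⟩,
    s', ⟨hs'S, hs.1.1.trans_le hs'x, (hSE.1 hs'S).2⟩, hcol'⟩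
end

section
/- Let n ≥ 1 and let x, y : Fin n → ℝ. Define the red point set R = {(xᵢ, xᵢ) : i ∈ Fin n} ∪ {(xᵢ − 1, xᵢ) : i ∈ Fin n} and the blue point set B = {(yⱼ, yⱼ) : j ∈ Fin n} ∪ {(yⱼ − 1, yⱼ) : j ∈ Fin n}. Then there exist indices i, j with 0 < |xᵢ − yⱼ| < 1 if and only if there exist a point u ∈ R and a point v ∈ B such that the line through u and v has negative slope, i.e., (u₁ − v₁)(u₂ − v₂) < 0 where u = (u₁,u₂) and v = (v₁,v₂). -/
/-!
Each number `a` contributes the two points `(a, a)` and `(a - 1, a)`, whose second coordinates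
are both `a`. For a red point over `a` and a blue point over `b` the slope condition reads
`(d + s) * d < 0` with `d = a - b` and `s ∈ {-1, 0, 1}`: `s = 0` never works, while `s = ∓1` works
exactly when `d` lies strictly between `0` and `±1`. So the pair of points spans a line of
negative slope exactly when `0 < |a - b| < 1`.
-/

def gadget {α : Type*} [Ring α] (a : α) : Set (α × α) := {(a, a), (a - 1, a)}

lemma range_union_range_eq_iUnion_gadget {α ι : Type*} [Ring α] (x : ι → α) :
    ((Set.range fun i => (x i, x i)) ∪ Set.range fun i => (x i - 1, x i)) =
      ⋃ i, gadget (x i) := by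
  ext p
  simp only [gadget, Set.mem_union, Set.mem_range, Set.mem_iUnion, Set.mem_insert_iff,
    Set.mem_singleton_iff, eq_comm (a := p), exists_or]

variable {α : Type*} [CommRing α] [LinearOrder α] [IsStrictOrderedRing α]

lemma sub_one_mul_self_neg_iff (d : α) : (d - 1) * d < 0 ↔ 0 < d ∧ d < 1 := by
  rw [mul_neg_iff]
  constructor
  · rintro (⟨h₁, h₂⟩ | ⟨h₁, h₂⟩) <;> constructor <;> linarith
  · rintro ⟨h₀, h₁⟩
    exact Or.inr ⟨by linarith, h₀⟩

lemma abs_mem_Ioo_zero_one_iff (d : α) :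
    (0 < |d| ∧ |d| < 1) ↔ (0 < d ∧ d < 1) ∨ (0 < -d ∧ -d < 1) := by
  rcases le_total 0 d with h | h
  · rw [abs_of_nonneg h]
    constructor
    · exact Or.inl
    · rintro (hd | ⟨h₀, -⟩)
      · exact hd
      · exact absurd h (by linarith)
  · rw [abs_of_nonpos h]
    constructor
    · exact Or.inr
    · rintro (⟨h₀, -⟩ | hd)
      · exact absurd h (by linarith)
      · exact hd

theorem exists_negSlope_gadget_iff (a b : α) :
    (∃ u ∈ gadget a, ∃ v ∈ gadget b, (u.1 - v.1) * (u.2 - v.2) < 0) ↔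
      0 < |a - b| ∧ |a - b| < 1 := by
  have same_offset : ¬ (a - b) * (a - b) < 0 := not_lt.2 (mul_self_nonneg _)
  have red_lower : (a - 1 - b) * (a - b) = (a - b - 1) * (a - b) := by ring
  have blue_lower : (a - (b - 1)) * (a - b) = (-(a - b) - 1) * -(a - b) := by ring
  simp only [gadget, Set.mem_insert_iff, Set.mem_singleton_iff, exists_eq_or_imp, exists_eq_left,
    sub_sub_sub_cancel_right, red_lower, blue_lower, sub_one_mul_self_neg_iff, same_offset,
    abs_mem_Ioo_zero_one_iff]
  tauto

theorem open_unitary_gap_iff_negative_slope_general (n : ℕ)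
    (x y : Fin n → ℝ)
    (R B : Set (ℝ × ℝ))
    (hR : R = (Set.range fun i => ((x i, x i) : ℝ × ℝ)) ∪
      (Set.range fun i => ((x i - 1, x i) : ℝ × ℝ)))
    (hB : B = (Set.range fun j => ((y j, y j) : ℝ × ℝ)) ∪
      (Set.range fun j => ((y j - 1, y j) : ℝ × ℝ))) :
    (∃ i j : Fin n, 0 < |x i - y j| ∧ |x i - y j| < 1) ↔
      (∃ u ∈ R, ∃ v ∈ B, (u.1 - v.1) * (u.2 - v.2) < 0) := by
  subst hR hB
  simp only [range_union_range_eq_iUnion_gadget, ← exists_negSlope_gadget_iff, Set.mem_iUnion]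
  constructor
  · rintro ⟨i, j, u, hu, v, hv, h⟩
    exact ⟨u, ⟨i, hu⟩, v, ⟨j, hv⟩, h⟩
  · rintro ⟨u, ⟨i, hu⟩, v, ⟨j, hv⟩, h⟩
    exact ⟨i, j, u, hu, v, hv, h⟩

/-- The 2-Colored Open Unitary Gap instance `x, y` has a pair at open distance in `(0,1)`
if and only if the associated red/blue point set (red points `(xᵢ, xᵢ)` and `(xᵢ - 1, xᵢ)`,
blue points `(yⱼ, yⱼ)` and `(yⱼ - 1, yⱼ)`) contains a red point and a blue point spanning
a line of negative slope. -/
theorem open_unitary_gap_iff_negative_slope (n : ℕ) (hn : 1 ≤ n)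
    (x y : Fin n → ℝ)
    (R B : Set (ℝ × ℝ))
    (hR : R = (Set.range fun i => ((x i, x i) : ℝ × ℝ)) ∪
      (Set.range fun i => ((x i - 1, x i) : ℝ × ℝ)))
    (hB : B = (Set.range fun j => ((y j, y j) : ℝ × ℝ)) ∪
      (Set.range fun j => ((y j - 1, y j) : ℝ × ℝ))) :
    (∃ i j : Fin n, 0 < |x i - y j| ∧ |x i - y j| < 1) ↔
      (∃ u ∈ R, ∃ v ∈ B, (u.1 - v.1) * (u.2 - v.2) < 0) :=
  open_unitary_gap_iff_negative_slope_general n x y R B hR hB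
end

section
/- Let P be a nonempty finite set of points in ℝ² with a coloring χ : P → {red, blue}. Let max_x, max_y, min_x, min_y be the maximum and minimum x- and y-coordinates of points of P, define r = (max_x + 1, max_y + 1) colored green and s = (min_x − 1, min_y − 1) colored black, and let O = P ∪ {r, s} with the extended 4-coloring. Then there exist two points p, q ∈ P with χ(p) ≠ χ(q) such that the line through p and q has negative slope (i.e., (p₁ − q₁)(p₂ − q₂) < 0) if and only if there exists a point c ∈ ℝ² and points w₁ ∈ NE(c) ∩ O, w₂ ∈ NW(c) ∩ O, w₃ ∈ SW(c) ∩ O, w₄ ∈ SE(c) ∩ O having pairwise distinct colors in the extended coloring. -/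
open MeasureTheory

/-!
The corners `r` and `s` lie strictly north-east, resp. south-west, of every point of `P`.
Hence if `b` lies up-left of `a`, the midpoint of `a` and `b` is the apex of a cross with
arms `r, b, s, a`, whose colors green, `χ b`, black, `χ a` are distinct when `χ a ≠ χ b`.
Conversely, `O` lies in the box spanned by `s` and `r`, so neither corner can be the NW or SE
arm of a cross in `O` (the NE arm is further right and higher, the SW arm further left and
lower); the NW and SE arms are thus two differently colored points of `P` spanning a line of
negative slope.
-/

open Set

theorem Prod.not_le_of_fst_lt {α β : Type*} [Preorder α] [LE β] {u z : α × β}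
    (h : z.1 < u.1) : ¬u ≤ z :=
  fun hle => (Prod.le_def.1 hle).1.not_gt h

theorem Prod.not_le_of_snd_lt {α β : Type*} [LE α] [Preorder β] {u z : α × β}
    (h : z.2 < u.2) : ¬u ≤ z :=
  fun hle => (Prod.le_def.1 hle).2.not_gt h

theorem mem_of_mem_union_pair_of_not_le {α : Type*} [Preorder α] {P : Set α} {r s u v z : α}
    (hz : z ∈ P ∪ {r, s}) (hu : u ≤ r) (hv : s ≤ v) (hzu : ¬u ≤ z) (hzv : ¬z ≤ v) : z ∈ P := by
  rcases hz with hz | rfl | rfl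
  · exact hz
  · exact absurd hu hzu
  · exact absurd hv hzv

theorem le_of_mem_quadSW {c z : ℝ × ℝ} (hz : z ∈ quadSW c) : z ≤ c :=
  Prod.le_def.2 ⟨hz.1.le, hz.2.le⟩

theorem le_of_mem_quadNE {c z : ℝ × ℝ} (hz : z ∈ quadNE c) : c ≤ z :=
  Prod.le_def.2 ⟨hz.1.le, hz.2.le⟩

theorem ne_of_mem_quadSW {c z : ℝ × ℝ} (hz : z ∈ quadSW c) : z ≠ c :=
  fun h => hz.1.ne (congrArg Prod.fst h)

theorem ne_of_mem_quadNE {c z : ℝ × ℝ} (hz : z ∈ quadNE c) : z ≠ c :=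
  fun h => hz.1.ne' (congrArg Prod.fst h)

theorem mul_neg_of_mem_quadNW_of_mem_quadSE {c p q : ℝ × ℝ} (hp : p ∈ quadNW c)
    (hq : q ∈ quadSE c) : (p.1 - q.1) * (p.2 - q.2) < 0 :=
  mul_neg_of_neg_of_pos (sub_neg.2 (hp.1.trans hq.1)) (sub_pos.2 (hq.2.trans hp.2))

theorem exists_lt_lt_of_exists_mul_neg {β : Type*} {P : Set (ℝ × ℝ)} {χ : ℝ × ℝ → β}
    (h : ∃ p ∈ P, ∃ q ∈ P, χ p ≠ χ q ∧ (p.1 - q.1) * (p.2 - q.2) < 0) :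
    ∃ a ∈ P, ∃ b ∈ P, χ a ≠ χ b ∧ b.1 < a.1 ∧ a.2 < b.2 := by
  obtain ⟨p, hp, q, hq, hpq, hneg⟩ := h
  rcases mul_neg_iff.1 hneg with ⟨h₁, h₂⟩ | ⟨h₁, h₂⟩
  · exact ⟨p, hp, q, hq, hpq, sub_pos.1 h₁, sub_neg.1 h₂⟩
  · exact ⟨q, hq, p, hp, hpq.symm, sub_neg.1 h₁, sub_pos.1 h₂⟩

theorem exists_cross_of_lt_of_lt {a b r s : ℝ × ℝ} (h₁ : b.1 < a.1) (h₂ : a.2 < b.2)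
    (har : a ∈ quadSW r) (hbr : b ∈ quadSW r) (has : a ∈ quadNE s) (hbs : b ∈ quadNE s) :
    ∃ c, r ∈ quadNE c ∧ b ∈ quadNW c ∧ s ∈ quadSW c ∧ a ∈ quadSE c := by
  refine ⟨((a.1 + b.1) / 2, (a.2 + b.2) / 2), ⟨?_, ?_⟩, ⟨?_, ?_⟩, ⟨?_, ?_⟩, ⟨?_, ?_⟩⟩ <;>
    dsimp only <;> linarith [har.1, hbr.2, has.2, hbs.1]

section BoundingBox

variable {P : Finset (ℝ × ℝ)} (hP : P.Nonempty) {z : ℝ × ℝ}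

theorem mem_quadSW_sup'_add_one (hz : z ∈ P) :
    z ∈ quadSW (P.sup' hP Prod.fst + 1, P.sup' hP Prod.snd + 1) :=
  ⟨(P.le_sup' Prod.fst hz).trans_lt (lt_add_one _),
    (P.le_sup' Prod.snd hz).trans_lt (lt_add_one _)⟩

theorem mem_quadNE_inf'_sub_one (hz : z ∈ P) :
    z ∈ quadNE (P.inf' hP Prod.fst - 1, P.inf' hP Prod.snd - 1) :=
  ⟨(sub_one_lt _).trans_le (P.inf'_le Prod.fst hz),
    (sub_one_lt _).trans_le (P.inf'_le Prod.snd hz)⟩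

end BoundingBox

theorem union_pair_subset_Icc {α : Type*} [Preorder α] {P : Set α} {r s : α}
    (hP : P ⊆ Icc s r) (hsr : s ≤ r) : P ∪ {r, s} ⊆ Icc s r :=
  union_subset hP (insert_subset ⟨hsr, le_rfl⟩ (singleton_subset_iff.2 ⟨le_rfl, hsr⟩))

theorem mem_of_mem_quadNW_of_mem_quadSE_of_cross {P : Set (ℝ × ℝ)} {r s c w₁ w₂ w₃ w₄ : ℝ × ℝ}
    (hO : P ∪ {r, s} ⊆ Icc s r) (hw₁ : w₁ ∈ quadNE c ∩ (P ∪ {r, s}))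
    (hw₂ : w₂ ∈ quadNW c ∩ (P ∪ {r, s})) (hw₃ : w₃ ∈ quadSW c ∩ (P ∪ {r, s}))
    (hw₄ : w₄ ∈ quadSE c ∩ (P ∪ {r, s})) : w₂ ∈ P ∧ w₄ ∈ P :=
  ⟨mem_of_mem_union_pair_of_not_le hw₂.2 (hO hw₁.2).2 (hO hw₃.2).1
      (Prod.not_le_of_fst_lt (hw₂.1.1.trans hw₁.1.1))
      (Prod.not_le_of_snd_lt (hw₃.1.2.trans hw₂.1.2)),
    mem_of_mem_union_pair_of_not_le hw₄.2 (hO hw₁.2).2 (hO hw₃.2).1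
      (Prod.not_le_of_snd_lt (hw₄.1.2.trans hw₁.1.2))
      (Prod.not_le_of_fst_lt (hw₃.1.1.trans hw₄.1.1))⟩

theorem distinct_four_colors {x y : Fin 4} (hx : x = 0 ∨ x = 1) (hy : y = 0 ∨ y = 1)
    (hxy : x ≠ y) : 2 ≠ y ∧ (2 : Fin 4) ≠ 3 ∧ 2 ≠ x ∧ y ≠ 3 ∧ y ≠ x ∧ 3 ≠ x := by
  rcases hx with rfl | rfl <;> rcases hy with rfl | rfl <;> simp_all

/-- A red/blue point set `P` contains two points of different colors spanning a line of
negative slope if and only if the set `O = P ∪ {r, s}`, where `r` is a green point above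
and to the right of `P` and `s` is a black point below and to the left of `P`, contains
a 4-colored cross (colors: red = 0, blue = 1, green = 2, black = 3). -/
theorem negative_slope_iff_four_colored_cross
    (P : Finset (ℝ × ℝ)) (hP : P.Nonempty) (χ : ℝ × ℝ → Fin 4)
    (hχ : ∀ z ∈ P, χ z = 0 ∨ χ z = 1)
    (r s : ℝ × ℝ)
    (hr : r = (P.sup' hP Prod.fst + 1, P.sup' hP Prod.snd + 1))
    (hs : s = (P.inf' hP Prod.fst - 1, P.inf' hP Prod.snd - 1))
    (O : Set (ℝ × ℝ)) (hO : O = ↑P ∪ {r, s})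
    (χO : ℝ × ℝ → Fin 4)
    (hχO : χO = fun z => if z = r then 2 else if z = s then 3 else χ z) :
    (∃ p ∈ P, ∃ q ∈ P, χ p ≠ χ q ∧ (p.1 - q.1) * (p.2 - q.2) < 0) ↔
      (∃ c : ℝ × ℝ, ∃ w₁ ∈ quadNE c ∩ O, ∃ w₂ ∈ quadNW c ∩ O,
        ∃ w₃ ∈ quadSW c ∩ O, ∃ w₄ ∈ quadSE c ∩ O,
        χO w₁ ≠ χO w₂ ∧ χO w₁ ≠ χO w₃ ∧ χO w₁ ≠ χO w₄ ∧
          χO w₂ ≠ χO w₃ ∧ χO w₂ ≠ χO w₄ ∧ χO w₃ ≠ χO w₄) := by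
  have hPr : ∀ z ∈ P, z ∈ quadSW r := hr ▸ fun z => mem_quadSW_sup'_add_one hP
  have hPs : ∀ z ∈ P, z ∈ quadNE s := hs ▸ fun z => mem_quadNE_inf'_sub_one hP
  obtain ⟨z₀, hz₀⟩ := hP
  have hsr : s ≤ r := (le_of_mem_quadNE (hPs z₀ hz₀)).trans (le_of_mem_quadSW (hPr z₀ hz₀))
  have hsr' : s ≠ r := fun h => ((hPs z₀ hz₀).1.trans (hPr z₀ hz₀).1).ne (congrArg Prod.fst h)
  have hχr : χO r = 2 := by simp [hχO]
  have hχs : χO s = 3 := by simp [hχO, hsr']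
  have hχP : ∀ z ∈ P, χO z = χ z := fun z hz => by
    simp only [hχO, if_neg (ne_of_mem_quadSW (hPr z hz)), if_neg (ne_of_mem_quadNE (hPs z hz))]
  subst hO
  constructor
  · intro h
    obtain ⟨a, ha, b, hb, hab, h₁, h₂⟩ := exists_lt_lt_of_exists_mul_neg h
    obtain ⟨c, hrc, hbc, hsc, hac⟩ :=
      exists_cross_of_lt_of_lt h₁ h₂ (hPr a ha) (hPr b hb) (hPs a ha) (hPs b hb)
    refine ⟨c, r, ⟨hrc, by simp⟩, b, ⟨hbc, by simp [hb]⟩, s, ⟨hsc, by simp⟩,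
      a, ⟨hac, by simp [ha]⟩, ?_⟩
    rw [hχr, hχs, hχP a ha, hχP b hb]
    exact distinct_four_colors (hχ a ha) (hχ b hb) hab
  · rintro ⟨c, w₁, hw₁, w₂, hw₂, w₃, hw₃, w₄, hw₄, -, -, -, -, h₂₄, -⟩
    have hPsr : (P : Set (ℝ × ℝ)) ⊆ Icc s r := fun z hz =>
      ⟨le_of_mem_quadNE (hPs z hz), le_of_mem_quadSW (hPr z hz)⟩
    obtain ⟨hw₂P, hw₄P⟩ := mem_of_mem_quadNW_of_mem_quadSE_of_cross
      (union_pair_subset_Icc hPsr hsr) hw₁ hw₂ hw₃ hw₄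
    refine ⟨w₂, hw₂P, w₄, hw₄P, ?_, mul_neg_of_mem_quadNW_of_mem_quadSE hw₂.1 hw₄.1⟩
    rwa [← hχP w₂ hw₂P, ← hχP w₄ hw₄P]
end

section
/- Let P be a nonempty finite set of points in ℝ² with a coloring χ : P → {red, blue}, let r = (max_x + 1, max_y + 1) colored green and s = (min_x − 1, min_y − 1) colored black (where max_x, max_y, min_x, min_y are the maximum and minimum x- and y-coordinates over P), and let O = P ∪ {r, s} with the extended 4-coloring. If c ∈ ℝ² and w₁ ∈ NE(c) ∩ O, w₂ ∈ NW(c) ∩ O, w₃ ∈ SW(c) ∩ O, w₄ ∈ SE(c) ∩ O are points of pairwise distinct colors, then w₁ = r and w₃ = s; that is, the green point r must lie in the first open quadrant of c, the black point s must lie in the third open quadrant of c, and w₂, w₄ are points of P of distinct colors (one red, one blue). -/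
open MeasureTheory

/-!
Every point of `O` lies in the box `[s, r]`, so `r` is coordinatewise above the witness in
`NE(c)` and hence itself lies in `NE(c)`; likewise `s ∈ SW(c)`. Four pairwise distinct colors
out of four exhaust all colors, so green and black both occur among the witnesses; the only
green point is `r` and the only black point is `s`, and since the four open quadrants are
pairwise disjoint, `r` can only be the NE witness and `s` only the SW witness.
-/

lemma Fin.eq_or_eq_or_eq_or_eq_of_pairwise_ne {a b c d : Fin 4}
    (h : a ≠ b ∧ a ≠ c ∧ a ≠ d ∧ b ≠ c ∧ b ≠ d ∧ c ≠ d) (k : Fin 4) :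
    k = a ∨ k = b ∨ k = c ∨ k = d := by
  revert a b c d k
  decide

lemma isUpperSet_quadNE (c : ℝ × ℝ) : IsUpperSet (quadNE c) :=
  fun _ _ hle hz => ⟨hz.1.trans_le hle.1, hz.2.trans_le hle.2⟩

lemma isLowerSet_quadSW (c : ℝ × ℝ) : IsLowerSet (quadSW c) :=
  fun _ _ hle hz => ⟨hle.1.trans_lt hz.1, hle.2.trans_lt hz.2⟩

section Cross

variable {c p w₁ w₂ w₃ w₄ : ℝ × ℝ}

lemma eq_of_mem_quadNE_of_cross (hp : p ∈ quadNE c) (h₂ : w₂ ∈ quadNW c)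
    (h₃ : w₃ ∈ quadSW c) (h₄ : w₄ ∈ quadSE c) (h : p = w₁ ∨ p = w₂ ∨ p = w₃ ∨ p = w₄) :
    p = w₁ := by
  rcases h with rfl | rfl | rfl | rfl
  · rfl
  · exact (hp.1.asymm h₂.1).elim
  · exact (hp.1.asymm h₃.1).elim
  · exact (hp.2.asymm h₄.2).elim

lemma eq_of_mem_quadSW_of_cross (hp : p ∈ quadSW c) (h₁ : w₁ ∈ quadNE c)
    (h₂ : w₂ ∈ quadNW c) (h₄ : w₄ ∈ quadSE c) (h : p = w₁ ∨ p = w₂ ∨ p = w₃ ∨ p = w₄) :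
    p = w₃ := by
  rcases h with rfl | rfl | rfl | rfl
  · exact (hp.1.asymm h₁.1).elim
  · exact (hp.2.asymm h₂.2).elim
  · rfl
  · exact (hp.1.asymm h₄.1).elim

end Cross

section Corners

variable {P : Finset (ℝ × ℝ)} (hP : P.Nonempty)

def upperCorner : ℝ × ℝ := (P.sup' hP Prod.fst + 1, P.sup' hP Prod.snd + 1)

def lowerCorner : ℝ × ℝ := (P.inf' hP Prod.fst - 1, P.inf' hP Prod.snd - 1)

lemma le_upperCorner {z : ℝ × ℝ} (hz : z ∈ P) : z ≤ upperCorner hP := by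
  constructor <;> dsimp only [upperCorner]
  · linarith [P.le_sup' Prod.fst hz]
  · linarith [P.le_sup' Prod.snd hz]

lemma lowerCorner_le {z : ℝ × ℝ} (hz : z ∈ P) : lowerCorner hP ≤ z := by
  constructor <;> dsimp only [lowerCorner]
  · linarith [P.inf'_le Prod.fst hz]
  · linarith [P.inf'_le Prod.snd hz]

lemma union_corners_subset_Icc :
    ↑P ∪ {upperCorner hP, lowerCorner hP} ⊆ Set.Icc (lowerCorner hP) (upperCorner hP) := by
  have ⟨a, ha⟩ := hP
  have hle : lowerCorner hP ≤ upperCorner hP := (lowerCorner_le _ ha).trans (le_upperCorner _ ha)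
  rintro z (hz | rfl | rfl)
  · exact ⟨lowerCorner_le _ hz, le_upperCorner _ hz⟩
  · exact ⟨hle, le_rfl⟩
  · exact ⟨le_rfl, hle⟩

end Corners

section Coloring

variable {α : Type*} {P : Set α} {χ : α → Fin 4} {r s z : α}

lemma mem_of_mem_union_pair_of_ne (hz : z ∈ P ∪ {r, s}) (hr : z ≠ r) (hs : z ≠ s) : z ∈ P := by
  simpa [hr, hs] using hz

variable [DecidableEq α]

def extendColoring (χ : α → Fin 4) (r s : α) (z : α) : Fin 4 :=
  if z = r then 2 else if z = s then 3 else χ z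

lemma extendColoring_of_ne (hr : z ≠ r) (hs : z ≠ s) : extendColoring χ r s z = χ z := by
  simp only [extendColoring, if_neg hr, if_neg hs]

lemma eq_of_extendColoring_eq_two (hχ : ∀ z ∈ P, χ z = 0 ∨ χ z = 1) (hz : z ∈ P ∪ {r, s})
    (h : extendColoring χ r s z = 2) : z = r := by
  by_contra hr
  by_cases hs : z = s
  · subst hs
    simp [extendColoring, hr] at h
  · rw [extendColoring_of_ne hr hs] at h
    rcases hχ z (mem_of_mem_union_pair_of_ne hz hr hs) with h' | h' <;> simp [h'] at h

lemma eq_of_extendColoring_eq_three (hχ : ∀ z ∈ P, χ z = 0 ∨ χ z = 1) (hz : z ∈ P ∪ {r, s})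
    (h : extendColoring χ r s z = 3) : z = s := by
  by_contra hs
  by_cases hr : z = r
  · simp [extendColoring, hr] at h
  · rw [extendColoring_of_ne hr hs] at h
    rcases hχ z (mem_of_mem_union_pair_of_ne hz hr hs) with h' | h' <;> simp [h'] at h

end Coloring

/-- In the set `O = P ∪ {r, s}` obtained from a red/blue point set `P` by adding a green
point `r` above and to the right of `P` and a black point `s` below and to the left of
`P` (colors: red = 0, blue = 1, green = 2, black = 3), any 4-colored cross must have the
green point `r` in the first open quadrant of its center and the black point `s` in the
third, while the remaining two witnesses are points of `P` of distinct colors. -/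
theorem cross_witnesses_forced
    (P : Finset (ℝ × ℝ)) (hP : P.Nonempty) (χ : ℝ × ℝ → Fin 4)
    (hχ : ∀ z ∈ P, χ z = 0 ∨ χ z = 1)
    (r s : ℝ × ℝ)
    (hr : r = (P.sup' hP Prod.fst + 1, P.sup' hP Prod.snd + 1))
    (hs : s = (P.inf' hP Prod.fst - 1, P.inf' hP Prod.snd - 1))
    (O : Set (ℝ × ℝ)) (hO : O = ↑P ∪ {r, s})
    (χO : ℝ × ℝ → Fin 4)
    (hχO : χO = fun z => if z = r then 2 else if z = s then 3 else χ z)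
    (c w₁ w₂ w₃ w₄ : ℝ × ℝ)
    (h₁ : w₁ ∈ quadNE c ∩ O) (h₂ : w₂ ∈ quadNW c ∩ O)
    (h₃ : w₃ ∈ quadSW c ∩ O) (h₄ : w₄ ∈ quadSE c ∩ O)
    (hcol : χO w₁ ≠ χO w₂ ∧ χO w₁ ≠ χO w₃ ∧ χO w₁ ≠ χO w₄ ∧
      χO w₂ ≠ χO w₃ ∧ χO w₂ ≠ χO w₄ ∧ χO w₃ ≠ χO w₄) :
    w₁ = r ∧ w₃ = s ∧ w₂ ∈ (P : Set (ℝ × ℝ)) ∧ w₄ ∈ (P : Set (ℝ × ℝ)) ∧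
      χ w₂ ≠ χ w₄ := by
  obtain rfl : χO = extendColoring χ r s := hχO
  subst hO
  have hbox : (P : Set (ℝ × ℝ)) ∪ {r, s} ⊆ Set.Icc s r := by
    rw [hr, hs]
    exact union_corners_subset_Icc hP
  have hcover := Fin.eq_or_eq_or_eq_or_eq_of_pairwise_ne hcol
  obtain ⟨h12, -, h14, h23, h24, h34⟩ := hcol
  have green {z} (hz : z ∈ (P : Set (ℝ × ℝ)) ∪ {r, s}) (h : 2 = extendColoring χ r s z) : r = z :=
    (eq_of_extendColoring_eq_two hχ hz h.symm).symm
  have black {z} (hz : z ∈ (P : Set (ℝ × ℝ)) ∪ {r, s}) (h : 3 = extendColoring χ r s z) : s = z :=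
    (eq_of_extendColoring_eq_three hχ hz h.symm).symm
  have hw₁ : w₁ = r := by
    refine (eq_of_mem_quadNE_of_cross (isUpperSet_quadNE c (hbox h₁.2).2 h₁.1)
      h₂.1 h₃.1 h₄.1 ?_).symm
    exact (hcover 2).imp (green h₁.2) (.imp (green h₂.2) (.imp (green h₃.2) (green h₄.2)))
  have hw₃ : w₃ = s := by
    refine (eq_of_mem_quadSW_of_cross (isLowerSet_quadSW c (hbox h₃.2).1 h₃.1)
      h₁.1 h₂.1 h₄.1 ?_).symm
    exact (hcover 3).imp (black h₁.2) (.imp (black h₂.2) (.imp (black h₃.2) (black h₄.2)))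
  have hw₂r : w₂ ≠ r := hw₁ ▸ ne_of_apply_ne _ h12.symm
  have hw₂s : w₂ ≠ s := hw₃ ▸ ne_of_apply_ne _ h23
  have hw₄r : w₄ ≠ r := hw₁ ▸ ne_of_apply_ne _ h14.symm
  have hw₄s : w₄ ≠ s := hw₃ ▸ ne_of_apply_ne _ h34.symm
  refine ⟨hw₁, hw₃, mem_of_mem_union_pair_of_ne h₂.2 hw₂r hw₂s, mem_of_mem_union_pair_of_ne h₄.2 hw₄r hw₄s, ?_⟩
  rwa [extendColoring_of_ne hw₂r hw₂s, extendColoring_of_ne hw₄r hw₄s] at h24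
end

section
/- Let n ≥ 1 and let N ⊆ ℝ^{2n} be the set N = {z : Fin (2n) → ℝ | for all i, j ∈ Fin n, it is not the case that 0 < |z(i) − z(n + j)| < 1} (the set of NOT-instances of the 2-Colored Open Unitary Gap problem). For permutations σ, π of Fin n, let p_{σ,π} ∈ ℝ^{2n} be the point whose i-th coordinate (for i ∈ Fin n) is the odd number 2σ(i) + 1 and whose (n + j)-th coordinate (for j ∈ Fin n) is the even number 2π(j) + 2. Then for any two pairs of permutations (σ, π) ≠ (σ', π'), the points p_{σ,π} and p_{σ',π'} both lie in N but lie in different connected components of N. -/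
/-!
The difference `z i - z (n + j)` of a NOT-instance is never `1/2`, so by the intermediate value
theorem its side of `1/2` is constant on each connected component. At `p_{σ,π}` that difference is
`2σ(i) - 2π(j) - 1`, which exceeds `1/2` exactly when `π(j) < σ(i)`; hence a component determines
the relation `π(j) < σ(i)`. Since `σ(i) = #{j | π(j) < σ(i)}`, this relation determines `σ`, and
then, as `σ` is onto, also `π`.
-/

/-- The set of NOT-instances of the 2-Colored Open Unitary Gap problem in `ℝ^{2n}`:
points `z` such that for all `i, j ∈ Fin n`, `|z i - z (n + j)|` is not in `(0, 1)`. -/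
def gapNotInstances (n : ℕ) : Set (Fin (2 * n) → ℝ) :=
  {z | ∀ i j : Fin n,
    ¬ (0 < |z ⟨i.1, by have := i.isLt; omega⟩ - z ⟨n + j.1, by have := j.isLt; omega⟩| ∧
       |z ⟨i.1, by have := i.isLt; omega⟩ - z ⟨n + j.1, by have := j.isLt; omega⟩| < 1)}

/-- The point of `ℝ^{2n}` whose first `n` coordinates are the permutation `σ` of the odd
numbers `1, 3, …, 2n - 1` and whose last `n` coordinates are the permutation `π` of the
even numbers `2, 4, …, 2n`. -/
def permPoint (n : ℕ) (σ π : Equiv.Perm (Fin n)) : Fin (2 * n) → ℝ :=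
  fun k =>
    if h : k.1 < n then 2 * (σ ⟨k.1, h⟩ : ℕ) + 1
    else 2 * (π ⟨k.1 - n, by have := k.isLt; omega⟩ : ℕ) + 2

open Finset

theorem IsPreconnected.lt_iff_lt_of_forall_ne {X α : Type*} [TopologicalSpace X] [LinearOrder α]
    [TopologicalSpace α] [OrderClosedTopology α] {S : Set X} (hS : IsPreconnected S)
    {f : X → α} (hf : ContinuousOn f S) {c : α} (hc : ∀ x ∈ S, f x ≠ c) {a b : X}
    (ha : a ∈ S) (hb : b ∈ S) : c < f a ↔ c < f b := by
  have key : ∀ {a b}, a ∈ S → b ∈ S → c < f a → c < f b := fun {a b} ha hb hca => by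
    by_contra! hbc
    obtain ⟨x, hxS, hx⟩ := hS.intermediate_value hb ha hf ⟨hbc, hca.le⟩
    exact hc x hxS hx
  exact ⟨key ha hb, key hb ha⟩

theorem Equiv.Perm.card_filter_apply_lt {n : ℕ} (π : Equiv.Perm (Fin n)) (k : Fin n) :
    #{j | π j < k} = k := by
  rw [card_equiv π (t := {j | j < k}) (by simp), filter_gt_eq_Iio, Fin.card_Iio]

theorem Equiv.Perm.eq_of_forall_apply_lt_iff {n : ℕ} {σ π σ' π' : Equiv.Perm (Fin n)}
    (h : ∀ i j, π j < σ i ↔ π' j < σ' i) : σ = σ' ∧ π = π' := by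
  have hσ : σ = σ' := by
    ext i
    rw [← π.card_filter_apply_lt, ← π'.card_filter_apply_lt]
    exact congrArg card (filter_congr fun j _ => h i j)
  subst hσ
  have hπ : ∀ j k, π j < k ↔ π' j < k := fun j k => by
    simpa using h (σ.symm k) j
  refine ⟨rfl, Equiv.ext fun j => le_antisymm ?_ ?_⟩
  · exact not_lt.mp fun hlt => lt_irrefl _ ((hπ j (π j)).mpr hlt)
  · exact not_lt.mp fun hlt => lt_irrefl _ ((hπ j (π' j)).mp hlt)

def colorDiff (n : ℕ) (i j : Fin n) (z : Fin (2 * n) → ℝ) : ℝ :=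
  z ⟨i.1, by have := i.isLt; omega⟩ - z ⟨n + j.1, by have := j.isLt; omega⟩

theorem continuous_colorDiff (n : ℕ) (i j : Fin n) : Continuous (colorDiff n i j) :=
  (continuous_apply _).sub (continuous_apply _)

theorem mem_gapNotInstances_iff {n : ℕ} {z : Fin (2 * n) → ℝ} :
    z ∈ gapNotInstances n ↔ ∀ i j, ¬ (0 < |colorDiff n i j z| ∧ |colorDiff n i j z| < 1) :=
  Iff.rfl

theorem colorDiff_ne_half {n : ℕ} {z : Fin (2 * n) → ℝ} (hz : z ∈ gapNotInstances n)
    (i j : Fin n) : colorDiff n i j z ≠ 1 / 2 := fun h =>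
  mem_gapNotInstances_iff.mp hz i j (by norm_num [h])

theorem half_lt_colorDiff_iff_of_isPreconnected {n : ℕ} {S : Set (Fin (2 * n) → ℝ)}
    (hS : IsPreconnected S) (hSN : S ⊆ gapNotInstances n) {z w : Fin (2 * n) → ℝ}
    (hz : z ∈ S) (hw : w ∈ S) (i j : Fin n) :
    1 / 2 < colorDiff n i j z ↔ 1 / 2 < colorDiff n i j w :=
  hS.lt_iff_lt_of_forall_ne (continuous_colorDiff n i j).continuousOn
    (fun _ hx => colorDiff_ne_half (hSN hx) i j) hz hw

theorem colorDiff_permPoint (n : ℕ) (σ π : Equiv.Perm (Fin n)) (i j : Fin n) :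
    colorDiff n i j (permPoint n σ π) = 2 * (σ i : ℕ) - 2 * (π j : ℕ) - 1 := by
  have hj : (⟨n + j.1 - n, by have := j.isLt; omega⟩ : Fin n) = j := Fin.ext (by simp)
  simp only [colorDiff, permPoint, dif_pos i.isLt, dif_neg (show ¬ n + j.1 < n by omega), hj,
    Fin.eta]
  ring

theorem half_lt_colorDiff_permPoint_iff (n : ℕ) (σ π : Equiv.Perm (Fin n)) (i j : Fin n) :
    1 / 2 < colorDiff n i j (permPoint n σ π) ↔ π j < σ i := by
  rw [colorDiff_permPoint, Fin.lt_def]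
  constructor <;> intro h
  · by_contra! hle
    have : ((σ i : ℕ) : ℝ) ≤ (π j : ℕ) := by exact_mod_cast hle
    linarith
  · have : ((π j : ℕ) : ℝ) + 1 ≤ (σ i : ℕ) := by exact_mod_cast h
    linarith

theorem permPoint_mem_gapNotInstances (n : ℕ) (σ π : Equiv.Perm (Fin n)) :
    permPoint n σ π ∈ gapNotInstances n := by
  refine mem_gapNotInstances_iff.mpr fun i j ⟨_, hlt⟩ => ?_
  rw [colorDiff_permPoint, abs_lt] at hlt
  rcases le_or_gt (σ i : ℕ) (π j : ℕ) with h | h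
  · have : ((σ i : ℕ) : ℝ) ≤ (π j : ℕ) := by exact_mod_cast h
    linarith
  · have : ((π j : ℕ) : ℝ) + 1 ≤ (σ i : ℕ) := by exact_mod_cast h
    linarith

theorem permPoints_in_distinct_components_general (n : ℕ)
    (σ π σ' π' : Equiv.Perm (Fin n)) (hne : (σ, π) ≠ (σ', π')) :
    permPoint n σ π ∈ gapNotInstances n ∧ permPoint n σ' π' ∈ gapNotInstances n ∧
      connectedComponentIn (gapNotInstances n) (permPoint n σ π) ≠
        connectedComponentIn (gapNotInstances n) (permPoint n σ' π') := by
  have hmem := permPoint_mem_gapNotInstances n σ π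
  have hmem' := permPoint_mem_gapNotInstances n σ' π'
  refine ⟨hmem, hmem', fun heq => hne ?_⟩
  have hp' : permPoint n σ' π' ∈ connectedComponentIn (gapNotInstances n) (permPoint n σ π) :=
    heq ▸ mem_connectedComponentIn hmem'
  have hrel : ∀ i j, π j < σ i ↔ π' j < σ' i := fun i j => by
    rw [← half_lt_colorDiff_permPoint_iff, ← half_lt_colorDiff_permPoint_iff]
    exact half_lt_colorDiff_iff_of_isPreconnected isPreconnected_connectedComponentIn
      (connectedComponentIn_subset _ _) (mem_connectedComponentIn hmem) hp' i j
  obtain ⟨rfl, rfl⟩ := Equiv.Perm.eq_of_forall_apply_lt_iff hrel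
  rfl

/-- Distinct pairs of permutations give points in distinct connected components of the
set of NOT-instances of the 2-Colored Open Unitary Gap problem. -/
theorem permPoints_in_distinct_components (n : ℕ) (hn : 1 ≤ n)
    (σ π σ' π' : Equiv.Perm (Fin n)) (hne : (σ, π) ≠ (σ', π')) :
    permPoint n σ π ∈ gapNotInstances n ∧ permPoint n σ' π' ∈ gapNotInstances n ∧
      connectedComponentIn (gapNotInstances n) (permPoint n σ π) ≠
        connectedComponentIn (gapNotInstances n) (permPoint n σ' π') :=
  permPoints_in_distinct_components_general n σ π σ' π' hne
end

section
/- Let n ≥ 1 and let N ⊆ ℝ^{2n} be the set N = {z : Fin (2n) → ℝ | for all i, j ∈ Fin n, it is not the case that 0 < |z(i) − z(n + j)| < 1}. Then N has at least (n!)² connected components; precisely, there exists an injective map from Perm(Fin n) × Perm(Fin n) into the set of connected components of N. -/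
open Set

theorem IsPreconnected.le_iff_le_of_forall_notMem_Ioo {X α : Type*} [TopologicalSpace X]
    [LinearOrder α] [TopologicalSpace α] [OrderClosedTopology α] [DenselyOrdered α]
    {s : Set X} {f : X → α} {a b : α} {x y : X} (hs : IsPreconnected s) (hf : ContinuousOn f s)
    (hab : a < b) (hgap : ∀ z ∈ s, f z ∉ Ioo a b) (hx : x ∈ s) (hy : y ∈ s) :
    f x ≤ a ↔ f y ≤ a := by
  suffices key : ∀ x ∈ s, ∀ y ∈ s, f x ≤ a → f y ≤ a from ⟨key x hx y hy, key y hy x hx⟩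
  intro x hx y hy hxa
  by_contra! hya
  have hyb : b ≤ f y := not_lt.mp fun hyb => hgap y hy ⟨hya, hyb⟩
  obtain ⟨c, hac, hcb⟩ := exists_between hab
  obtain ⟨z, hz, rfl⟩ := hs.intermediate_value hx hy hf ⟨hxa.trans hac.le, hcb.le.trans hyb⟩
  exact hgap z hz ⟨hac, hcb⟩

open Finset in
theorem Equiv.Perm.card_filter_val_lt {n m : ℕ} (τ : Equiv.Perm (Fin n)) (hm : m ≤ n) :
    #{j | (τ j : ℕ) < m} = m := by
  calc #{j | (τ j : ℕ) < m} = #{i : Fin n | (i : ℕ) < m} := card_equiv τ (by simp)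
    _ = m := by rw [Fin.card_filter_val_lt, min_eq_right hm]

open Finset in
theorem Equiv.Perm.eq_and_eq_of_le_iff_le {n : ℕ} {σ τ σ' τ' : Equiv.Perm (Fin n)}
    (h : ∀ i j, σ i ≤ τ j ↔ σ' i ≤ τ' j) : σ = σ' ∧ τ = τ' := by
  constructor
  · ext i
    calc (σ i : ℕ) = #{j | (τ j : ℕ) < σ i} := (τ.card_filter_val_lt (σ i).is_le').symm
      _ = #{j | (τ' j : ℕ) < σ' i} := by
        refine congrArg card (filter_congr fun j _ => ?_)
        rw [← Fin.lt_def, ← Fin.lt_def, ← not_le, ← not_le, h]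
      _ = σ' i := τ'.card_filter_val_lt (σ' i).is_le'
  · ext j
    have hcount : (τ j : ℕ) + 1 = τ' j + 1 :=
      calc (τ j : ℕ) + 1 = #{i | (σ i : ℕ) < τ j + 1} := (σ.card_filter_val_lt (τ j).isLt).symm
        _ = #{i | (σ' i : ℕ) < τ' j + 1} := by
          refine congrArg card (filter_congr fun i _ => ?_)
          rw [Nat.lt_succ_iff, Nat.lt_succ_iff, ← Fin.le_def, ← Fin.le_def, h]
        _ = τ' j + 1 := σ'.card_filter_val_lt (τ' j).isLt
    exact Nat.add_right_cancel hcount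

namespace GapNotInstances

variable {n : ℕ}

def leftIdx (i : Fin n) : Fin (2 * n) := ⟨i, by omega⟩

def rightIdx (j : Fin n) : Fin (2 * n) := ⟨n + j, by omega⟩

theorem mem_iff {z : Fin (2 * n) → ℝ} :
    z ∈ gapNotInstances n ↔ ∀ i j, |z (leftIdx i) - z (rightIdx j)| ∉ Ioo 0 1 :=
  Iff.rfl

theorem le_iff_le_of_mem_connectedComponentIn {z w : Fin (2 * n) → ℝ}
    (hz : z ∈ gapNotInstances n) (hw : w ∈ connectedComponentIn (gapNotInstances n) z)
    (i j : Fin n) : z (leftIdx i) ≤ z (rightIdx j) ↔ w (leftIdx i) ≤ w (rightIdx j) := by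
  have hgap : ∀ u ∈ connectedComponentIn (gapNotInstances n) z,
      u (leftIdx i) - u (rightIdx j) ∉ Ioo 0 1 := fun u hu hmem => by
    refine mem_iff.mp (connectedComponentIn_subset _ _ hu) i j ?_
    rwa [abs_of_pos hmem.1]
  simpa only [sub_nonpos] using isPreconnected_connectedComponentIn.le_iff_le_of_forall_notMem_Ioo
    (by fun_prop) zero_lt_one hgap (mem_connectedComponentIn hz) hw

noncomputable def permPoint (σ τ : Equiv.Perm (Fin n)) : Fin (2 * n) → ℝ := fun k =>
  if h : (k : ℕ) < n then 2 * (σ ⟨k, h⟩ : ℕ) else 2 * (τ ⟨k - n, by omega⟩ : ℕ) + 1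

theorem permPoint_leftIdx (σ τ : Equiv.Perm (Fin n)) (i : Fin n) :
    permPoint σ τ (leftIdx i) = 2 * (σ i : ℕ) := by
  simp [permPoint, leftIdx]

theorem permPoint_rightIdx (σ τ : Equiv.Perm (Fin n)) (j : Fin n) :
    permPoint σ τ (rightIdx j) = 2 * (τ j : ℕ) + 1 := by
  simp [permPoint, rightIdx]

theorem permPoint_le_iff (σ τ : Equiv.Perm (Fin n)) (i j : Fin n) :
    permPoint σ τ (leftIdx i) ≤ permPoint σ τ (rightIdx j) ↔ σ i ≤ τ j := by
  rw [permPoint_leftIdx, permPoint_rightIdx, Fin.le_def]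
  have hnat : 2 * (σ i : ℕ) ≤ 2 * (τ j : ℕ) + 1 ↔ (σ i : ℕ) ≤ τ j := by omega
  exact_mod_cast hnat

theorem permPoint_mem (σ τ : Equiv.Perm (Fin n)) : permPoint σ τ ∈ gapNotInstances n := by
  refine mem_iff.mpr fun i j hmem => hmem.2.not_ge ?_
  rw [permPoint_leftIdx, permPoint_rightIdx, le_abs']
  have hodd : 2 * (σ i : ℤ) - (2 * τ j + 1) ≤ -1 ∨ 1 ≤ 2 * (σ i : ℤ) - (2 * τ j + 1) := by omega
  exact_mod_cast hodd

end GapNotInstances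

open GapNotInstances in
theorem gapNotInstances_many_components_general (n : ℕ) :
    ∃ f : Equiv.Perm (Fin n) × Equiv.Perm (Fin n) → (Fin (2 * n) → ℝ),
      (∀ sp, f sp ∈ gapNotInstances n) ∧
      Function.Injective (fun sp => connectedComponentIn (gapNotInstances n) (f sp)) := by
  refine ⟨fun sp => permPoint sp.1 sp.2, fun sp => permPoint_mem sp.1 sp.2, ?_⟩
  rintro ⟨σ, τ⟩ ⟨σ', τ'⟩ (h : connectedComponentIn _ _ = connectedComponentIn _ _)
  have hw : permPoint σ' τ' ∈ connectedComponentIn (gapNotInstances n) (permPoint σ τ) :=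
    h ▸ mem_connectedComponentIn (permPoint_mem σ' τ')
  obtain ⟨rfl, rfl⟩ := Equiv.Perm.eq_and_eq_of_le_iff_le fun i j => by
    simpa only [permPoint_le_iff] using
      le_iff_le_of_mem_connectedComponentIn (permPoint_mem σ τ) hw i j
  rfl

/-- The set of NOT-instances of the 2-Colored Open Unitary Gap problem has at least
`(n!)²` connected components: there is a map from pairs of permutations of `Fin n` to
points of the set inducing an injective map into its connected components. -/
theorem gapNotInstances_many_components (n : ℕ) (hn : 1 ≤ n) :
    ∃ f : Equiv.Perm (Fin n) × Equiv.Perm (Fin n) → (Fin (2 * n) → ℝ),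
      (∀ sp, f sp ∈ gapNotInstances n) ∧
      Function.Injective (fun sp => connectedComponentIn (gapNotInstances n) (f sp)) :=
  gapNotInstances_many_components_general n
end

section
/- Let P be a set of four points in ℝ². The rectilinear convex hull RH(P) has positive area if and only if the four points of P can be strictly separated by a cross formed by one vertical and one horizontal line: that is, if and only if there exist real numbers a and b such that each of the four open regions {x > a, y > b}, {x < a, y > b}, {x < a, y < b}, {x > a, y < b} contains exactly one point of P. -/
/-!
A point `z` all four of whose open quadrants meet `P` lies in `RH P`, because an open quadrant
containing `z` contains the quadrant of `z` of the same kind; these points form an open set, so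
`RH P` has positive area as soon as there is one. Conversely, for finite `P`, almost every point
of `RH P` avoids the grid lines through the points of `P`, and for such a point `z` the quadrant
with apex slightly shifted away from `z` meets `P` only inside the corresponding quadrant of `z`.
For four points, the four pairwise disjoint quadrants of `z` must then hold one point each.
-/

open MeasureTheory

open Set

def crossCenters (P : Set (ℝ × ℝ)) : Set (ℝ × ℝ) :=
  {c | (P ∩ quadNE c).Nonempty ∧ (P ∩ quadNW c).Nonempty ∧
    (P ∩ quadSW c).Nonempty ∧ (P ∩ quadSE c).Nonempty}

lemma quadNE_subset_of_mem_s13 {c z : ℝ × ℝ} (hz : z ∈ quadNE c) : quadNE z ⊆ quadNE c :=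
  fun _ h => ⟨hz.1.trans h.1, hz.2.trans h.2⟩

lemma quadNW_subset_of_mem_s13 {c z : ℝ × ℝ} (hz : z ∈ quadNW c) : quadNW z ⊆ quadNW c :=
  fun _ h => ⟨h.1.trans hz.1, hz.2.trans h.2⟩

lemma quadSW_subset_of_mem_s13 {c z : ℝ × ℝ} (hz : z ∈ quadSW c) : quadSW z ⊆ quadSW c :=
  fun _ h => ⟨h.1.trans hz.1, h.2.trans hz.2⟩

lemma quadSE_subset_of_mem_s13 {c z : ℝ × ℝ} (hz : z ∈ quadSE c) : quadSE z ⊆ quadSE c :=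
  fun _ h => ⟨hz.1.trans h.1, h.2.trans hz.2⟩

lemma crossCenters_subset_RH (P : Set (ℝ × ℝ)) : crossCenters P ⊆ RH P := by
  rintro z ⟨hNE, hNW, hSW, hSE⟩ Q ⟨c, rfl | rfl | rfl | rfl⟩ hz
  · exact hNE.mono fun p hp => ⟨quadNE_subset_of_mem_s13 hz hp.2, hp.1⟩
  · exact hNW.mono fun p hp => ⟨quadNW_subset_of_mem_s13 hz hp.2, hp.1⟩
  · exact hSW.mono fun p hp => ⟨quadSW_subset_of_mem_s13 hz hp.2, hp.1⟩
  · exact hSE.mono fun p hp => ⟨quadSE_subset_of_mem_s13 hz hp.2, hp.1⟩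

lemma isOpen_crossCenters (P : Set (ℝ × ℝ)) : IsOpen (crossCenters P) := by
  have hmeets : ∀ r : ℝ × ℝ → ℝ × ℝ → Prop, (∀ p, IsOpen {c | r c p}) →
      IsOpen {c | ∃ p ∈ P, r c p} := fun r hr => by
    convert isOpen_biUnion fun p (_ : p ∈ P) => hr p
    ext; simp
  refine (hmeets (fun c p => p ∈ quadNE c) fun p => ?_).inter <|
    (hmeets (fun c p => p ∈ quadNW c) fun p => ?_).inter <|
    (hmeets (fun c p => p ∈ quadSW c) fun p => ?_).inter <|
    hmeets (fun c p => p ∈ quadSE c) fun p => ?_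
  all_goals
    simp only [quadNE, quadNW, quadSW, quadSE, ofPred_and]
    exact (isOpen_lt (by fun_prop) (by fun_prop)).inter (isOpen_lt (by fun_prop) (by fun_prop))

lemma exists_pos_le_abs_sub_of_notMem {s : Set ℝ} (hs : IsClosed s) {t : ℝ} (ht : t ∉ s) :
    ∃ ε > 0, ∀ x ∈ s, ε ≤ |x - t| := by
  obtain ⟨ε, hε, hball⟩ := Metric.isOpen_iff.1 hs.isOpen_compl t ht
  refine ⟨ε, hε, fun x hx => ?_⟩
  by_contra! hlt
  exact hball (by rwa [Metric.mem_ball, Real.dist_eq]) hx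

lemma lt_of_sub_lt_of_le_abs_sub {x t ε : ℝ} (hε : ε ≤ |x - t|) (h : t - ε < x) : t < x := by
  cases abs_cases (x - t) <;> linarith

lemma lt_of_lt_add_of_le_abs_sub {x t ε : ℝ} (hε : ε ≤ |x - t|) (h : x < t + ε) : x < t := by
  cases abs_cases (x - t) <;> linarith

lemma mem_crossCenters_of_mem_RH {P : Set (ℝ × ℝ)} (hP : P.Finite) {z : ℝ × ℝ}
    (hz : z ∈ RH P) (h₁ : z.1 ∉ Prod.fst '' P) (h₂ : z.2 ∉ Prod.snd '' P) :
    z ∈ crossCenters P := by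
  obtain ⟨ε₁, hε₁, hgap₁⟩ := exists_pos_le_abs_sub_of_notMem (hP.image _).isClosed h₁
  obtain ⟨ε₂, hε₂, hgap₂⟩ := exists_pos_le_abs_sub_of_notMem (hP.image _).isClosed h₂
  have gap₁ : ∀ p ∈ P, ε₁ ≤ |p.1 - z.1| := fun p hp => hgap₁ _ (mem_image_of_mem _ hp)
  have gap₂ : ∀ p ∈ P, ε₂ ≤ |p.2 - z.2| := fun p hp => hgap₂ _ (mem_image_of_mem _ hp)
  refine ⟨?_, ?_, ?_, ?_⟩
  · obtain ⟨p, hpQ, hp⟩ := hz (quadNE (z.1 - ε₁, z.2 - ε₂)) ⟨_, .inl rfl⟩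
      ⟨by simp [hε₁], by simp [hε₂]⟩
    exact ⟨p, hp, lt_of_sub_lt_of_le_abs_sub (gap₁ p hp) hpQ.1,
      lt_of_sub_lt_of_le_abs_sub (gap₂ p hp) hpQ.2⟩
  · obtain ⟨p, hpQ, hp⟩ := hz (quadNW (z.1 + ε₁, z.2 - ε₂)) ⟨_, .inr <| .inl rfl⟩
      ⟨by simp [hε₁], by simp [hε₂]⟩
    exact ⟨p, hp, lt_of_lt_add_of_le_abs_sub (gap₁ p hp) hpQ.1,
      lt_of_sub_lt_of_le_abs_sub (gap₂ p hp) hpQ.2⟩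
  · obtain ⟨p, hpQ, hp⟩ := hz (quadSW (z.1 + ε₁, z.2 + ε₂)) ⟨_, .inr <| .inr <| .inl rfl⟩
      ⟨by simp [hε₁], by simp [hε₂]⟩
    exact ⟨p, hp, lt_of_lt_add_of_le_abs_sub (gap₁ p hp) hpQ.1,
      lt_of_lt_add_of_le_abs_sub (gap₂ p hp) hpQ.2⟩
  · obtain ⟨p, hpQ, hp⟩ := hz (quadSE (z.1 - ε₁, z.2 + ε₂)) ⟨_, .inr <| .inr <| .inr rfl⟩
      ⟨by simp [hε₁], by simp [hε₂]⟩
    exact ⟨p, hp, lt_of_sub_lt_of_le_abs_sub (gap₁ p hp) hpQ.1,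
      lt_of_lt_add_of_le_abs_sub (gap₂ p hp) hpQ.2⟩

lemma volume_fst_preimage_eq_zero {A : Set ℝ} (hA : A.Countable) :
    volume (Prod.fst ⁻¹' A : Set (ℝ × ℝ)) = 0 :=
  Measure.quasiMeasurePreserving_fst.preimage_null (hA.measure_zero volume)

lemma volume_snd_preimage_eq_zero {A : Set ℝ} (hA : A.Countable) :
    volume (Prod.snd ⁻¹' A : Set (ℝ × ℝ)) = 0 :=
  Measure.quasiMeasurePreserving_snd.preimage_null (hA.measure_zero volume)

lemma crossCenters_nonempty_of_volume_RH_pos {P : Set (ℝ × ℝ)} (hP : P.Finite)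
    (hvol : 0 < volume (RH P)) : (crossCenters P).Nonempty := by
  set grid : Set (ℝ × ℝ) := Prod.fst ⁻¹' (Prod.fst '' P) ∪ Prod.snd ⁻¹' (Prod.snd '' P)
  have hgrid : volume grid = 0 := measure_union_null
    (volume_fst_preimage_eq_zero (hP.image _).countable)
    (volume_snd_preimage_eq_zero (hP.image _).countable)
  obtain ⟨z, hz, hzgrid⟩ : (RH P \ grid).Nonempty :=
    nonempty_of_measure_ne_zero (by rwa [measure_sdiff_null hgrid, ← pos_iff_ne_zero])
  simp only [grid, mem_union, mem_preimage, not_or] at hzgrid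
  exact ⟨z, mem_crossCenters_of_mem_RH hP hz hzgrid.1 hzgrid.2⟩

lemma ncard_inter_union_of_disjoint {α : Type*} {P A B : Set α} (hP : P.Finite)
    (h : Disjoint A B) : (P ∩ (A ∪ B)).ncard = (P ∩ A).ncard + (P ∩ B).ncard := by
  rw [inter_union_distrib_left,
    ncard_union_eq (h.mono inter_subset_right inter_subset_right) (hP.inter_of_left _)
      (hP.inter_of_left _)]

lemma ncard_inter_quadrants_le {P : Set (ℝ × ℝ)} (hP : P.Finite) (c : ℝ × ℝ) :
    (P ∩ quadNE c).ncard + (P ∩ quadNW c).ncard +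
      ((P ∩ quadSW c).ncard + (P ∩ quadSE c).ncard) ≤ P.ncard := by
  have hN : Disjoint (quadNE c) (quadNW c) := disjoint_left.2 fun _ h h' => h.1.asymm h'.1
  have hS : Disjoint (quadSW c) (quadSE c) := disjoint_left.2 fun _ h h' => h.1.asymm h'.1
  have hNS : Disjoint (quadNE c ∪ quadNW c) (quadSW c ∪ quadSE c) :=
    disjoint_left.2 fun _ h h' => by
      rcases h with h | h <;> rcases h' with h' | h' <;> exact h.2.asymm h'.2
  rw [← ncard_inter_union_of_disjoint hP hN, ← ncard_inter_union_of_disjoint hP hS,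
    ← ncard_inter_union_of_disjoint hP hNS]
  exact ncard_inter_le_ncard_left _ _ hP

/-- The rectilinear convex hull of a set of four points in the plane has positive area
if and only if the four points can be strictly separated by a cross formed by a vertical
line `x = a` and a horizontal line `y = b`: each of the four open regions determined by
the cross contains exactly one point of `P`. -/
theorem rh_pos_area_iff_separating_cross (P : Set (ℝ × ℝ)) (hP : P.ncard = 4) :
    0 < volume (RH P) ↔
      ∃ a b : ℝ, (P ∩ quadNE (a, b)).ncard = 1 ∧ (P ∩ quadNW (a, b)).ncard = 1 ∧
        (P ∩ quadSW (a, b)).ncard = 1 ∧ (P ∩ quadSE (a, b)).ncard = 1 := by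
  have hfin : P.Finite := finite_of_ncard_ne_zero (by omega)
  constructor
  · intro hvol
    obtain ⟨⟨a, b⟩, hNE, hNW, hSW, hSE⟩ := crossCenters_nonempty_of_volume_RH_pos hfin hvol
    have hsum := ncard_inter_quadrants_le hfin (a, b)
    have := (ncard_pos (hfin.inter_of_left _)).2 hNE
    have := (ncard_pos (hfin.inter_of_left _)).2 hNW
    have := (ncard_pos (hfin.inter_of_left _)).2 hSW
    have := (ncard_pos (hfin.inter_of_left _)).2 hSE
    exact ⟨a, b, by omega, by omega, by omega, by omega⟩
  · rintro ⟨a, b, hNE, hNW, hSW, hSE⟩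
    have hc : (a, b) ∈ crossCenters P := by
      refine ⟨?_, ?_, ?_, ?_⟩ <;> apply nonempty_of_ncard_ne_zero <;> omega
    exact ((isOpen_crossCenters P).measure_pos volume ⟨_, hc⟩).trans_le
      (measure_mono (crossCenters_subset_RH P))
end
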